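/- arXiv:2404.04438 — 4 statements merged into one kernel-verified Lean document; each statement's English description precedes it below -/
import Mathlib

section
/- For all natural numbers k ≥ 1 and s with k(k+1)/2 ≤ s, there exists a family A : Fin (k+1) → Finset (Fin s) of subsets of an s-element set such that every set A i has cardinality exactly k, for every pair of distinct indices i ≠ j the intersection A i ∩ A j contains exactly one element, and every element of Fin s belongs to at most 2 of the sets A i. -/
private def tri (n : ℕ) : ℕ := ∑ i ∈ Finset.range n, i

private lemma tri_succ (n : ℕ) : tri (n+1) = tri n + n := Finset.sum_range_succ _ _

private lemma tri_mono : Monotone tri := fun _ _ h =>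
  Finset.sum_le_sum_of_subset (Finset.range_subset_range.mpr h)

private lemma tri_inj {i j i' j' : ℕ} (h1 : i < j) (h2 : i' < j')
    (h : tri j + i = tri j' + i') : i = i' ∧ j = j' := by
  have hj : j = j' := by
    by_contra hne
    rcases Nat.lt_or_ge j j' with hlt | hge
    · have hm : tri (j+1) ≤ tri j' := tri_mono hlt
      have := tri_succ j
      omega
    · have hlt : j' < j := lt_of_le_of_ne hge (Ne.symm hne)
      have hm : tri (j'+1) ≤ tri j := tri_mono hlt
      have := tri_succ j'
      omega
  subst hj
  omega

/-- Adversarial construction (Case 1): for `k ≥ 1` and `k(k+1)/2 ≤ s` there exist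
`k+1` transactions (subsets of the `s` shards), each accessing exactly `k` shards,
every two of which share exactly one shard, and each shard used by at most 2 of them. -/
theorem stmt_0 (k s : ℕ) (hk : 1 ≤ k) (hs : k * (k + 1) / 2 ≤ s) :
    ∃ A : Fin (k + 1) → Finset (Fin s),
      (∀ i, (A i).card = k) ∧
      (∀ i j, i ≠ j → (A i ∩ A j).card = 1) ∧
      (∀ x : Fin s, (Finset.univ.filter (fun i => x ∈ A i)).card ≤ 2) := by
  have hkk : 2 ≤ k * (k + 1) := by nlinarith
  have hspos : 0 < s := by omega
  have h2 : tri (k+1) * 2 = k * (k+1) := by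
    have := Finset.sum_range_id_mul_two (k+1)
    simpa [tri, Nat.mul_comm] using this
  have htri : tri (k+1) ≤ s := by omega
  set v : Fin (k+1) → Fin (k+1) → ℕ :=
    fun i j => tri (max i.val j.val) + min i.val j.val with hv
  have hvlt : ∀ i j : Fin (k+1), i ≠ j → v i j < s := by
    intro i j hij
    have hne : i.val ≠ j.val := fun h => hij (Fin.ext h)
    have h1 : min i.val j.val < max i.val j.val := by omega
    have h3 : tri (max i.val j.val + 1) ≤ tri (k+1) :=
      tri_mono (by have := i.isLt; have := j.isLt; omega)
    have := tri_succ (max i.val j.val)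
    simp only [hv]
    omega
  set enc : Fin (k+1) → Fin (k+1) → Fin s :=
    fun i j => ⟨v i j % s, Nat.mod_lt _ hspos⟩ with hencdef
  have henc : ∀ i j : Fin (k+1), i ≠ j → (enc i j).val = v i j := by
    intro i j hij
    exact Nat.mod_eq_of_lt (hvlt i j hij)
  have hinj : ∀ i j i' j' : Fin (k+1), i ≠ j → i' ≠ j' → enc i j = enc i' j' →
      (i = i' ∧ j = j') ∨ (i = j' ∧ j = i') := by
    intro i j i' j' hij hij' he
    have hval : v i j = v i' j' := by
      have := henc i j hij
      have := henc i' j' hij'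
      have : (enc i j).val = (enc i' j').val := congrArg Fin.val he
      omega
    have hne : i.val ≠ j.val := fun h => hij (Fin.ext h)
    have hne' : i'.val ≠ j'.val := fun h => hij' (Fin.ext h)
    have h1 : min i.val j.val < max i.val j.val := by omega
    have h2 : min i'.val j'.val < max i'.val j'.val := by omega
    have := tri_inj h1 h2 hval
    have hcase : (i.val = i'.val ∧ j.val = j'.val) ∨ (i.val = j'.val ∧ j.val = i'.val) := by
      omega
    rcases hcase with ⟨ha, hb⟩ | ⟨ha, hb⟩
    · exact Or.inl ⟨Fin.ext ha, Fin.ext hb⟩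
    · exact Or.inr ⟨Fin.ext ha, Fin.ext hb⟩
  have hsymm : ∀ i j : Fin (k+1), enc i j = enc j i := by
    intro i j
    apply Fin.ext
    simp only [hencdef, hv]
    rw [Nat.max_comm, Nat.min_comm]
  refine ⟨fun i => (Finset.univ.erase i).image (enc i), ?_, ?_, ?_⟩
  · intro i
    have hi2 : Set.InjOn (enc i) (Finset.univ.erase i) := by
      intro a ha b hb hab
      simp only [Finset.coe_erase, Set.mem_diff, Finset.mem_coe] at ha hb
      have ha' : a ≠ i := by simpa using ha.2
      have hb' : b ≠ i := by simpa using hb.2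
      rcases hinj i a i b (Ne.symm ha') (Ne.symm hb') hab with ⟨_, h⟩ | ⟨h, _⟩
      · exact h
      · exact absurd h.symm hb'
    rw [Finset.card_image_of_injOn hi2, Finset.card_erase_of_mem (Finset.mem_univ i),
      Finset.card_univ, Fintype.card_fin]
    omega
  · intro i j hij
    have : ((Finset.univ.erase i).image (enc i)) ∩ ((Finset.univ.erase j).image (enc j))
        = {enc i j} := by
      ext x
      simp only [Finset.mem_inter, Finset.mem_image, Finset.mem_erase, Finset.mem_univ,
        and_true, Finset.mem_singleton]
      constructor
      · rintro ⟨⟨a, ha, rfl⟩, ⟨b, hb, hba⟩⟩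
        rcases hinj j b i a (Ne.symm hb) (Ne.symm ha) hba with ⟨h1, h2⟩ | ⟨h1, h2⟩
        · exact absurd h1 hij.symm
        · rw [h1]
      · rintro rfl
        exact ⟨⟨j, Ne.symm hij, rfl⟩, ⟨i, hij, hsymm j i⟩⟩
    rw [this, Finset.card_singleton]
  · intro x
    by_contra hcon
    push_neg at hcon
    have h3 : 2 < (Finset.univ.filter
        (fun i => x ∈ (Finset.univ.erase i).image (enc i))).card := hcon
    obtain ⟨a, b, c, ha, hb, hc, hab, hac, hbc⟩ := Finset.two_lt_card_iff.mp h3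
    simp only [Finset.mem_filter, Finset.mem_image, Finset.mem_erase, Finset.mem_univ,
      true_and, and_true] at ha hb hc
    obtain ⟨u, hu, hxu⟩ := ha
    obtain ⟨w, hw, hxw⟩ := hb
    obtain ⟨z, hz, hxz⟩ := hc
    rcases hinj a u b w (Ne.symm hu) (Ne.symm hw) (hxu.trans hxw.symm)
      with ⟨h1, _⟩ | ⟨h1, h2⟩
    · exact hab h1
    · -- u = b, so x = enc a b
      have hx2 : enc a b = x := by rw [← h2]; exact hxu
      rcases hinj c z a b (Ne.symm hz) hab (hxz.trans hx2.symm)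
        with ⟨h3, _⟩ | ⟨h3, _⟩
      · exact hac h3.symm
      · exact hbc h3.symm
end

section
/- Let k, m be natural numbers with m ≥ 1, let ι be a finite index type, let α be a finite type, and let A : ι → Finset α be a family of sets such that |A i| ≤ k for every i, and every element x ∈ α belongs to at most m of the sets A i. Then the simple graph G on ι, in which distinct i, j are adjacent iff A i ∩ A j is nonempty, has chromatic number at most (m − 1) · k + 1. -/
lemma greedy_colorable {ι : Type*} [Fintype ι] [DecidableEq ι]
    (G : SimpleGraph ι) [DecidableRel G.Adj] (d : ℕ)
    (hd : ∀ v, (Finset.univ.filter (G.Adj v)).card ≤ d) :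
    G.Colorable (d + 1) := by
  suffices h : ∀ s : Finset ι, ∃ c : ι → Fin (d + 1),
      ∀ i ∈ s, ∀ j ∈ s, G.Adj i j → c i ≠ c j by
    obtain ⟨c, hc⟩ := h Finset.univ
    exact ⟨⟨c, fun hadj => hc _ (Finset.mem_univ _) _ (Finset.mem_univ _) hadj⟩⟩
  intro s
  induction s using Finset.induction with
  | empty => exact ⟨fun _ => 0, by simp⟩
  | @insert a s ha ih =>
    obtain ⟨c, hc⟩ := ih
    obtain ⟨x, hx⟩ : ∃ x : Fin (d + 1), x ∉ (s.filter (G.Adj a)).image c := by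
      by_contra h
      push_neg at h
      have hsub : (Finset.univ : Finset (Fin (d + 1))) ⊆ (s.filter (G.Adj a)).image c :=
        fun x _ => h x
      have h1 := Finset.card_le_card hsub
      have h2 : ((s.filter (G.Adj a)).image c).card ≤ d :=
        le_trans Finset.card_image_le (le_trans
          (Finset.card_le_card (Finset.filter_subset_filter _ (Finset.subset_univ s))) (hd a))
      simp [Finset.card_univ] at h1
      omega
    refine ⟨Function.update c a x, ?_⟩
    intro i hi j hj hadj
    by_cases hia : i = a
    · subst hia
      by_cases hja : j = i
      · subst hja; exact absurd hadj (G.loopless.irrefl j)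
      · have hj' : j ∈ s := (Finset.mem_insert.mp hj).resolve_left hja
        rw [Function.update_self, Function.update_of_ne hja]
        exact fun h => hx (Finset.mem_image.mpr ⟨j, Finset.mem_filter.mpr ⟨hj', hadj⟩, h.symm⟩)
    · have hi' : i ∈ s := (Finset.mem_insert.mp hi).resolve_left hia
      by_cases hja : j = a
      · subst hja
        rw [Function.update_of_ne hia, Function.update_self]
        exact fun h => hx (Finset.mem_image.mpr ⟨i, Finset.mem_filter.mpr ⟨hi', hadj.symm⟩, h⟩)
      · have hj' : j ∈ s := (Finset.mem_insert.mp hj).resolve_left hja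
        rw [Function.update_of_ne hia, Function.update_of_ne hja]
        exact hc i hi' j hj' hadj

/-- Coloring bound (Case 1): the conflict graph of a family of sets, each of size at most
`k`, where each element lies in at most `m ≥ 1` sets, has chromatic number at most
`(m−1)·k + 1`. -/
theorem stmt_7 (k m : ℕ) (hm : 1 ≤ m) (ι : Type*) [Fintype ι] [DecidableEq ι]
    (α : Type*) [Fintype α] [DecidableEq α]
    (A : ι → Finset α)
    (hk : ∀ i, (A i).card ≤ k)
    (hcong : ∀ x : α, (Finset.univ.filter (fun i => x ∈ A i)).card ≤ m)
    (G : SimpleGraph ι)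
    (hG : ∀ i j, G.Adj i j ↔ i ≠ j ∧ (A i ∩ A j).Nonempty) :
    G.chromaticNumber ≤ ((m - 1) * k + 1 : ℕ) := by
  classical
  have : G.Colorable ((m - 1) * k + 1) := by
    apply greedy_colorable
    intro v
    have hsub : Finset.univ.filter (G.Adj v) ⊆
        (A v).biUnion (fun x => (Finset.univ.filter (fun i => x ∈ A i)).erase v) := by
      intro j hj
      rw [Finset.mem_filter] at hj
      obtain ⟨hne, x, hx⟩ := (hG v j).mp hj.2
      rw [Finset.mem_inter] at hx
      exact Finset.mem_biUnion.mpr ⟨x, hx.1,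
        Finset.mem_erase.mpr ⟨hne.symm, Finset.mem_filter.mpr ⟨Finset.mem_univ _, hx.2⟩⟩⟩
    calc (Finset.univ.filter (G.Adj v)).card
        ≤ ((A v).biUnion (fun x => (Finset.univ.filter (fun i => x ∈ A i)).erase v)).card :=
          Finset.card_le_card hsub
      _ ≤ ∑ x ∈ A v, ((Finset.univ.filter (fun i => x ∈ A i)).erase v).card :=
          Finset.card_biUnion_le
      _ ≤ ∑ x ∈ A v, (m - 1) := by
          apply Finset.sum_le_sum
          intro x hxv
          have hvmem : v ∈ Finset.univ.filter (fun i => x ∈ A i) :=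
            Finset.mem_filter.mpr ⟨Finset.mem_univ _, hxv⟩
          have := Finset.card_erase_of_mem hvmem
          have := hcong x
          omega
      _ = (A v).card * (m - 1) := by rw [Finset.sum_const, smul_eq_mul]
      _ ≤ k * (m - 1) := Nat.mul_le_mul_right _ (hk v)
      _ = (m - 1) * k := Nat.mul_comm _ _
  exact this.chromaticNumber_le
end

section
/- Let s, m be natural numbers with s ≥ 1 and m ≥ 1, let ι be a finite index type, and let A : ι → Finset (Fin s) be a family of sets such that every element x ∈ Fin s belongs to at most m of the sets A i. Then the simple graph G on ι, in which distinct i, j are adjacent iff A i ∩ A j is nonempty, has chromatic number at most m·⌈√s⌉ + (m − 1)·⌈√s⌉ + 1 = (2m − 1)·⌈√s⌉ + 1, where ⌈√s⌉ denotes the ceiling of the real square root of s. -/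
open scoped Classical in
/-- forbidden colors at `v` from earlier neighbors -/
noncomputable def greedyForb (adj : ℕ → ℕ → Prop) (f : ℕ → ℕ) (v : ℕ) : Finset ℕ :=
  ((Finset.range v).filter (fun u => adj u v)).image f

noncomputable def greedyColor (adj : ℕ → ℕ → Prop) : ℕ → ℕ
  | v => sInf {c : ℕ | c ∉ greedyForb adj (fun u : ℕ => if h : u < v then greedyColor adj u else 0) v}
termination_by v => v
decreasing_by exact h

lemma greedyForb_congr (adj : ℕ → ℕ → Prop) (f g : ℕ → ℕ) (v : ℕ)
    (h : ∀ u < v, f u = g u) : greedyForb adj f v = greedyForb adj g v := by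
  classical
  unfold greedyForb
  apply Finset.image_congr
  intro u hu
  simp only [Finset.coe_filter, Set.mem_setOf_eq, Finset.mem_range] at hu
  exact h u hu.1

lemma greedyColor_eq (adj : ℕ → ℕ → Prop) (v : ℕ) :
    greedyColor adj v = sInf {c : ℕ | c ∉ greedyForb adj (greedyColor adj) v} := by
  rw [greedyColor]
  congr 1
  ext c
  simp only [Set.mem_setOf_eq]
  rw [greedyForb_congr adj _ (greedyColor adj) v (fun u hu => by simp [hu])]

lemma greedy_set_nonempty (adj : ℕ → ℕ → Prop) (v : ℕ) :
    {c : ℕ | c ∉ greedyForb adj (greedyColor adj) v}.Nonempty := by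
  obtain ⟨c, hc⟩ := Infinite.exists_notMem_finset (greedyForb adj (greedyColor adj) v)
  exact ⟨c, hc⟩

lemma greedyColor_not_mem (adj : ℕ → ℕ → Prop) (v : ℕ) :
    greedyColor adj v ∉ greedyForb adj (greedyColor adj) v := by
  have := Nat.sInf_mem (greedy_set_nonempty adj v)
  rw [← greedyColor_eq] at this
  exact this

/-- validity: if `u < v` and `adj u v` then colors differ. -/
lemma greedyColor_ne (adj : ℕ → ℕ → Prop) {u v : ℕ} (huv : u < v) (ha : adj u v) :
    greedyColor adj u ≠ greedyColor adj v := by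
  classical
  intro h
  apply greedyColor_not_mem adj v
  unfold greedyForb
  rw [← h]
  exact Finset.mem_image_of_mem _ (by simp [Finset.mem_filter, Finset.mem_range, huv, ha])

/-- bound: the color is at most the number of earlier neighbors. -/
lemma greedyColor_le (adj : ℕ → ℕ → Prop) (v d : ℕ)
    [DecidablePred (fun u => adj u v)]
    (hd : ((Finset.range v).filter (fun u => adj u v)).card ≤ d) :
    greedyColor adj v ≤ d := by
  classical
  have hcard : (greedyForb adj (greedyColor adj) v).card ≤ d :=
    le_trans (Finset.card_image_le)
      (le_trans (le_of_eq (by congr 1; exact Finset.filter_congr_decidable _ _ _)) hd)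
  have : ∃ c ∈ Finset.range (d + 1), c ∉ greedyForb adj (greedyColor adj) v := by
    by_contra hcon
    push_neg at hcon
    have hsub : Finset.range (d + 1) ⊆ greedyForb adj (greedyColor adj) v := hcon
    have := Finset.card_le_card hsub
    simp only [Finset.card_range] at this
    omega
  obtain ⟨c, hc1, hc2⟩ := this
  rw [greedyColor_eq]
  exact le_trans (Nat.sInf_le hc2) (by simpa [Nat.lt_succ_iff] using Finset.mem_range.mp hc1)

/-- Coloring bound (Case 2): the conflict graph of a family of subsets of the `s ≥ 1`
shards, each shard lying in at most `m ≥ 1` sets, has chromatic number at most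
`m·⌈√s⌉ + (m−1)·⌈√s⌉ + 1 = (2m−1)·⌈√s⌉ + 1`. -/
theorem stmt_9 (s m : ℕ) (hs : 1 ≤ s) (hm : 1 ≤ m) (ι : Type*) [Fintype ι] [DecidableEq ι]
    (A : ι → Finset (Fin s))
    (hcong : ∀ x : Fin s, (Finset.univ.filter (fun i => x ∈ A i)).card ≤ m)
    (G : SimpleGraph ι)
    (hG : ∀ i j, G.Adj i j ↔ i ≠ j ∧ (A i ∩ A j).Nonempty) :
    G.chromaticNumber ≤
      (m * ⌈Real.sqrt s⌉₊ + (m - 1) * ⌈Real.sqrt s⌉₊ + 1 : ℕ) ∧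
    m * ⌈Real.sqrt s⌉₊ + (m - 1) * ⌈Real.sqrt s⌉₊ + 1 =
      (2 * m - 1) * ⌈Real.sqrt s⌉₊ + 1 := by
  classical
  set k := ⌈Real.sqrt s⌉₊ with hkdef
  constructor
  swap
  · have h1 : m + (m - 1) = 2 * m - 1 := by omega
    rw [← add_mul, h1]
  -- basic facts about k
  have hk1 : 1 ≤ k := by
    rw [hkdef]
    refine Nat.one_le_iff_ne_zero.mpr (fun h => ?_)
    have := Nat.ceil_eq_zero.mp h
    have h2 : (0:ℝ) < Real.sqrt s := Real.sqrt_pos.mpr (by exact_mod_cast hs)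
    linarith
  have hsk : s ≤ k * k := by
    have h1 : Real.sqrt s ≤ (k : ℝ) := Nat.le_ceil _
    have h2 : (s : ℝ) ≤ (k : ℝ) * k := by
      have := Real.sq_sqrt (show (0:ℝ) ≤ s by positivity)
      nlinarith [Real.sqrt_nonneg (s:ℝ)]
    exact_mod_cast h2
  -- heavy vertices
  set H : Finset ι := Finset.univ.filter (fun i => k < (A i).card) with hHdef
  -- double counting: total size ≤ m * s
  have hsum : ∑ i : ι, (A i).card ≤ s * m := by
    have h1 : ∑ i : ι, (A i).card
        = ∑ x : Fin s, (Finset.univ.filter (fun i => x ∈ A i)).card := by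
      simp only [Finset.card_filter]
      rw [Finset.sum_comm]
      congr 1
      ext i
      rw [← Finset.card_filter]
      congr 1
      simp [Finset.filter_mem_eq_inter]
    rw [h1]
    calc ∑ x : Fin s, (Finset.univ.filter (fun i => x ∈ A i)).card
        ≤ ∑ _x : Fin s, m := Finset.sum_le_sum (fun x _ => hcong x)
      _ = s * m := by simp [mul_comm]
  have hHcard : H.card ≤ m * k := by
    have h1 : H.card * (k + 1) ≤ ∑ i ∈ H, (A i).card := by
      calc H.card * (k + 1) = ∑ _i ∈ H, (k + 1) := by simp [mul_comm]
        _ ≤ ∑ i ∈ H, (A i).card := Finset.sum_le_sum (fun i hi => by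
            simp only [hHdef, Finset.mem_filter] at hi; omega)
    have h2 : ∑ i ∈ H, (A i).card ≤ ∑ i : ι, (A i).card :=
      Finset.sum_le_sum_of_subset (Finset.subset_univ H)
    have h3 : H.card * (k + 1) ≤ m * k * (k + 1) := by
      calc H.card * (k + 1) ≤ s * m := le_trans h1 (le_trans h2 hsum)
        _ ≤ k * k * m := by exact Nat.mul_le_mul_right m hsk
        _ ≤ m * k * (k + 1) := by nlinarith
    exact Nat.le_of_mul_le_mul_right h3 (by omega)
  -- neighbor count bound for light vertices
  have hnbr : ∀ i : ι, (A i).card ≤ k →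
      (Finset.univ.filter (fun j => j ≠ i ∧ (A i ∩ A j).Nonempty)).card ≤ (m - 1) * k := by
    intro i hi
    set N := Finset.univ.filter (fun j => j ≠ i ∧ (A i ∩ A j).Nonempty) with hNdef
    have hsub : N ⊆ (A i).biUnion (fun x => (Finset.univ.filter (fun j => x ∈ A j)).erase i) := by
      intro j hj
      simp only [hNdef, Finset.mem_filter, Finset.mem_univ, true_and] at hj
      obtain ⟨hji, x, hx⟩ := hj
      rw [Finset.mem_inter] at hx
      exact Finset.mem_biUnion.mpr ⟨x, hx.1,
        Finset.mem_erase.mpr ⟨hji, by simp [hx.2]⟩⟩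
    calc N.card ≤ ∑ x ∈ A i, ((Finset.univ.filter (fun j => x ∈ A j)).erase i).card :=
          le_trans (Finset.card_le_card hsub) (Finset.card_biUnion_le)
      _ ≤ ∑ _x ∈ A i, (m - 1) := by
          refine Finset.sum_le_sum (fun x hx => ?_)
          have hmem : i ∈ Finset.univ.filter (fun j => x ∈ A j) := by simp [hx]
          rw [Finset.card_erase_of_mem hmem]
          have := hcong x
          omega
      _ = (A i).card * (m - 1) := by simp [mul_comm]
      _ ≤ (m - 1) * k := by rw [mul_comm]; exact Nat.mul_le_mul_left _ hi
  -- ordering of vertices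
  set n := Fintype.card ι with hndef
  set e : ι ≃ Fin n := Fintype.equivFin ι with hedef
  set adj : ℕ → ℕ → Prop := fun a b =>
    ∃ (ha : a < n) (hb : b < n),
      G.Adj (e.symm ⟨a, ha⟩) (e.symm ⟨b, hb⟩) ∧
      (A (e.symm ⟨a, ha⟩)).card ≤ k ∧ (A (e.symm ⟨b, hb⟩)).card ≤ k with hadjdef
  -- rank of heavy vertices
  set rk : ι → ℕ := fun i => (H.filter (fun j => (e j : ℕ) < (e i : ℕ))).card with hrkdef
  have hrk_lt : ∀ i ∈ H, rk i < m * k := by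
    intro i hi
    have h1 : H.filter (fun j => (e j : ℕ) < (e i : ℕ)) ⊂ H := by
      refine Finset.ssubset_iff_of_subset (Finset.filter_subset _ _) |>.mpr ⟨i, hi, ?_⟩
      simp
    exact lt_of_lt_of_le (Finset.card_lt_card h1) hHcard
  have hrk_inj : ∀ i ∈ H, ∀ j ∈ H, i ≠ j → rk i ≠ rk j := by
    have key : ∀ i ∈ H, ∀ j ∈ H, (e i : ℕ) < (e j : ℕ) → rk i < rk j := by
      intro i hi j hj hij
      refine Finset.card_lt_card ?_
      constructor
      · intro l hl
        simp only [Finset.mem_filter] at hl ⊢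
        exact ⟨hl.1, by omega⟩
      · intro hcon
        have : i ∈ H.filter (fun l => (e l : ℕ) < (e i : ℕ)) :=
          hcon (by simp only [Finset.mem_filter]; exact ⟨hi, hij⟩)
        simp only [Finset.mem_filter] at this
        omega
    intro i hi j hj hij
    rcases lt_trichotomy ((e i : ℕ)) ((e j : ℕ)) with h | h | h
    · exact Nat.ne_of_lt (key i hi j hj h)
    · exact absurd (e.injective (Fin.ext h)) hij
    · exact (Nat.ne_of_lt (key j hj i hi h)).symm
  -- the coloring
  set col : ι → ℕ := fun i =>
    if k < (A i).card then (m - 1) * k + 1 + rk i else greedyColor adj (e i) with hcoldef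
  set Ncol := m * k + (m - 1) * k + 1 with hNcoldef
  -- greedy bound for light vertices
  have hein : ∀ (i : ι) (hb : (e i : ℕ) < n), e.symm ⟨(e i : ℕ), hb⟩ = i := by
    intro i hb
    have : (⟨(e i : ℕ), hb⟩ : Fin n) = e i := Fin.ext rfl
    rw [this, Equiv.symm_apply_apply]
  have hgreedy_le : ∀ i : ι, (A i).card ≤ k → greedyColor adj (e i) ≤ (m - 1) * k := by
    intro i hi
    refine greedyColor_le adj _ _ ?_
    set f : ℕ → ι := fun u => if h : u < n then e.symm ⟨u, h⟩ else i with hfdef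
    refine le_trans (Finset.card_le_card_of_injOn f ?_ ?_) (hnbr i hi)
    · intro u hu
      simp only [Finset.mem_coe, Finset.mem_filter, Finset.mem_range] at hu
      obtain ⟨ha, hb, hadj, -, -⟩ := hu.2
      rw [hein i hb] at hadj
      have hfu : f u = e.symm ⟨u, ha⟩ := by simp [hfdef, ha]
      rw [← hfu] at hadj
      rw [hG] at hadj
      simp only [Finset.mem_coe, Finset.mem_filter, Finset.mem_univ, true_and]
      refine ⟨hadj.1, ?_⟩
      rw [Finset.inter_comm]
      exact hadj.2
    · intro u hu u' hu' hf
      simp only [Finset.coe_filter, Set.mem_setOf_eq, Finset.mem_range] at hu hu'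
      obtain ⟨ha, -, -⟩ := hu.2
      obtain ⟨ha', -, -⟩ := hu'.2
      simp only [hfdef, dif_pos ha, dif_pos ha'] at hf
      have := e.symm.injective hf
      exact Fin.mk.inj_iff.mp this
  -- the coloring is bounded
  have hcol_lt : ∀ i : ι, col i < Ncol := by
    intro i
    by_cases hheavy : k < (A i).card
    · have hiH : i ∈ H := by simp [hHdef, hheavy]
      have := hrk_lt i hiH
      simp only [hcoldef, if_pos hheavy, hNcoldef]
      omega
    · push_neg at hheavy
      have := hgreedy_le i hheavy
      simp only [hcoldef, if_neg (not_lt.mpr hheavy), hNcoldef]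
      omega
  -- the coloring is valid
  have hcol_valid : ∀ i j : ι, G.Adj i j → col i ≠ col j := by
    -- symmetric helper for the light-light case
    have hlight : ∀ i j : ι, G.Adj i j → (A i).card ≤ k → (A j).card ≤ k →
        ((e i : ℕ)) < ((e j : ℕ)) → greedyColor adj (e i) ≠ greedyColor adj (e j) := by
      intro i j hadj hi hj hij
      refine greedyColor_ne adj hij ?_
      exact ⟨(e i).isLt, (e j).isLt, by rw [hein i (e i).isLt, hein j (e j).isLt]; exact hadj,
        by rw [hein i (e i).isLt]; exact hi, by rw [hein j (e j).isLt]; exact hj⟩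
    intro i j hadj
    have hne : i ≠ j := G.ne_of_adj hadj
    by_cases hhi : k < (A i).card <;> by_cases hhj : k < (A j).card
    · -- both heavy
      simp only [hcoldef, if_pos hhi, if_pos hhj]
      have h1 : rk i ≠ rk j :=
        hrk_inj i (by simp [hHdef, hhi]) j (by simp [hHdef, hhj]) hne
      omega
    · -- i heavy, j light
      push_neg at hhj
      have := hgreedy_le j hhj
      simp only [hcoldef, if_pos hhi, if_neg (not_lt.mpr hhj)]
      omega
    · -- i light, j heavy
      push_neg at hhi
      have := hgreedy_le i hhi
      simp only [hcoldef, if_neg (not_lt.mpr hhi), if_pos hhj]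
      omega
    · -- both light
      push_neg at hhi hhj
      simp only [hcoldef, if_neg (not_lt.mpr hhi), if_neg (not_lt.mpr hhj)]
      have hene : ((e i : ℕ)) ≠ ((e j : ℕ)) := by
        intro h
        exact hne (e.injective (Fin.ext h))
      rcases lt_or_gt_of_ne hene with h | h
      · exact hlight i j hadj hhi hhj h
      · exact (hlight j i hadj.symm hhj hhi h).symm
  -- assemble the coloring
  have hcolorable : G.Colorable Ncol := by
    refine ⟨SimpleGraph.Coloring.mk (fun i => (⟨col i, hcol_lt i⟩ : Fin Ncol)) ?_⟩
    intro v w hvw h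
    exact hcol_valid v w hvw (by simpa using congrArg Fin.val h)
  exact hcolorable.chromaticNumber_le
end

section
/- Let P, Q be natural numbers with P ≥ 1, and let N, C : ℕ → ℕ be monotone (nondecreasing) functions with N 0 = 0, C 0 = 0, and C t ≤ N t for all t. Suppose (a) for every z : ℕ, N((z+1)·P) − N(z·P) ≤ Q, and (b) for every z : ℕ with z ≥ 1, C((z+1)·P) ≥ N(z·P). Then for every t : ℕ, N t − C t ≤ 2·Q. -/
/-- Abstract stability: if at most `Q` transactions are injected per period of length
`P ≥ 1`, and every transaction injected during a period is committed by the end of the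
next period, then at most `2Q` transactions are pending at any round. -/
theorem stmt_14 (P Q : ℕ) (hP : 1 ≤ P) (N C : ℕ → ℕ)
    (hNmono : Monotone N) (hCmono : Monotone C)
    (hN0 : N 0 = 0) (hC0 : C 0 = 0)
    (hCN : ∀ t, C t ≤ N t)
    (ha : ∀ z : ℕ, N ((z + 1) * P) - N (z * P) ≤ Q)
    (hb : ∀ z : ℕ, 1 ≤ z → N (z * P) ≤ C ((z + 1) * P)) :
    ∀ t : ℕ, N t - C t ≤ 2 * Q := by
  intro t
  set z := t / P with hz
  have hle : z * P ≤ t := Nat.div_mul_le_self t P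
  have hlt : t < (z + 1) * P := by
    have h1 := Nat.div_add_mod t P
    have h2 := Nat.mod_lt t (show 0 < P by omega)
    have : (z + 1) * P = P * (t / P) + P := by ring
    omega
  have hNt : N t ≤ N ((z + 1) * P) := hNmono hlt.le
  rcases le_or_gt z 1 with hz1 | hz2
  · -- N t ≤ N (2*P) ≤ 2*Q
    have h2 : N ((z + 1) * P) ≤ N (2 * P) :=
      hNmono (Nat.mul_le_mul_right _ (by omega))
    have h0 := ha 0
    have h1 := ha 1
    simp only [Nat.zero_add, Nat.zero_mul, hN0, Nat.sub_zero, Nat.one_mul,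
      show (1:ℕ)+1 = 2 from rfl] at h0 h1
    omega
  · have hzm : z - 1 + 1 = z := by omega
    have hC : N ((z - 1) * P) ≤ C (z * P) := by
      have := hb (z - 1) (by omega)
      rwa [hzm] at this
    have hCt : C (z * P) ≤ C t := hCmono hle
    have h1 := ha (z - 1)
    rw [hzm] at h1
    have h2 := ha z
    omega
end
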